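/- Let B be a C*-algebra and A a closed *-subalgebra satisfying the ideal intersection property and axiom (inv). Then the map α : J ↦ J ∩ A is a bijection from the set of regular ideals of B onto the set of regular B-invariant ideals of A, with inverse β : I ↦ Ann_B(Ann_B(I)). Moreover α and β preserve inclusion. -/

import Mathlib

open Pointwise

variable {B : Type*} [NonUnitalCStarAlgebra B]

/-- Closed linear span of a subset of `B`. -/
def clSpan (S : Set B) : Set B := closure (Submodule.span ℂ S : Set B)

/-- `S` is `B`-invariant if `[SB] = [BS]`. -/
def BInvariant (S : Set B) : Prop :=
  clSpan (S * (Set.univ : Set B)) = clSpan ((Set.univ : Set B) * S)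

/-- The closed two-sided ideal of `B` generated by `S`, namely `[BSB]`. -/
def idealGen (S : Set B) : Set B :=
  clSpan ((Set.univ : Set B) * S * (Set.univ : Set B))

/-- Two-sided annihilator of `S` computed in `B`. -/
def annB (S : Set B) : Set B := {x | ∀ s ∈ S, x * s = 0 ∧ s * x = 0}

/-- Two-sided annihilator of `S` computed inside the subset `A ⊆ B`. -/
def annIn (A S : Set B) : Set B := {x ∈ A | ∀ s ∈ S, x * s = 0 ∧ s * x = 0}

/-- A closed *-subalgebra of `B`, regarded as a subset. -/
structure ClosedStarSubalgebra (A : Set B) : Prop where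
  isClosed : IsClosed A
  zero_mem : (0 : B) ∈ A
  add_mem : ∀ ⦃x y : B⦄, x ∈ A → y ∈ A → x + y ∈ A
  smul_mem : ∀ (c : ℂ) ⦃x : B⦄, x ∈ A → c • x ∈ A
  mul_mem : ∀ ⦃x y : B⦄, x ∈ A → y ∈ A → x * y ∈ A
  star_mem : ∀ ⦃x : B⦄, x ∈ A → star x ∈ A

/-- A norm-closed two-sided ideal of `B`. -/
structure ClosedTwoSidedIdeal (J : Set B) : Prop where
  isClosed : IsClosed J
  zero_mem : (0 : B) ∈ J
  add_mem : ∀ ⦃x y : B⦄, x ∈ J → y ∈ J → x + y ∈ J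
  smul_mem : ∀ (c : ℂ) ⦃x : B⦄, x ∈ J → c • x ∈ J
  mul_mem_left : ∀ (a : B) ⦃x : B⦄, x ∈ J → a * x ∈ J
  mul_mem_right : ∀ (a : B) ⦃x : B⦄, x ∈ J → x * a ∈ J

/-- A norm-closed two-sided ideal of the subalgebra `A ⊆ B`. -/
structure IdealOf (A J : Set B) : Prop where
  subset : J ⊆ A
  isClosed : IsClosed J
  zero_mem : (0 : B) ∈ J
  add_mem : ∀ ⦃x y : B⦄, x ∈ J → y ∈ J → x + y ∈ J
  smul_mem : ∀ (c : ℂ) ⦃x : B⦄, x ∈ J → c • x ∈ J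
  mul_mem_left : ∀ ⦃a : B⦄, a ∈ A → ∀ ⦃x : B⦄, x ∈ J → a * x ∈ J
  mul_mem_right : ∀ ⦃a : B⦄, a ∈ A → ∀ ⦃x : B⦄, x ∈ J → x * a ∈ J

/-- The ideal intersection property: every nonzero closed two-sided ideal of `B`
meets `A` nontrivially. -/
def IdealIntersectionProperty (A : Set B) : Prop :=
  ∀ J : Set B, ClosedTwoSidedIdeal J → J ≠ {0} → J ∩ A ≠ {0}

/-- Axiom (inv): `J ∩ A` is `B`-invariant for every closed two-sided ideal `J` of `B`. -/
def AxiomInv (A : Set B) : Prop :=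
  ∀ J : Set B, ClosedTwoSidedIdeal J → BInvariant (J ∩ A)

/-- A regular ideal of `B`. -/
def RegularIdealB (J : Set B) : Prop :=
  ClosedTwoSidedIdeal J ∧ annB (annB J) = J

/-- A regular ideal of the subalgebra `A`. -/
def RegularIdealIn (A I : Set B) : Prop :=
  IdealOf A I ∧ annIn A (annIn A I) = I

/-- A normalizer of `A` in `B`. -/
def IsNormalizer (A : Set B) (n : B) : Prop :=
  (∀ a ∈ A, star n * a * n ∈ A) ∧ (∀ a ∈ A, n * a * star n ∈ A)

/-- `A` contains an approximate unit for `B`. -/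
def ContainsApproxUnit (A : Set B) : Prop :=
  ∃ (ι : Type) (l : Filter ι) (e : ι → B), l.NeBot ∧ (∀ i, e i ∈ A) ∧
    ∀ b : B, Filter.Tendsto (fun i => e i * b) l (nhds b) ∧
      Filter.Tendsto (fun i => b * e i) l (nhds b)

/-- `A` is a regular subalgebra of `B`: the normalizers span a dense subspace of
`B` and `A` contains an approximate unit for `B`. -/
def RegularSubalgebra (A : Set B) : Prop :=
  ClosedStarSubalgebra A ∧ clSpan {n : B | IsNormalizer A n} = Set.univ ∧
    ContainsApproxUnit A

/-!
Write `α J = J ∩ A` and `β I = Ann_B (Ann_B I)`. Axiom (inv) makes `D = Ann_B (J ∩ A)` an ideal of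
`B`, and `D ∩ J` meets `A` only in `0`: an element `y` there has `y⋆y ∈ J ∩ A`, so `y y⋆ y = 0`,
which forces `y = 0` in a C⋆-algebra. By the ideal intersection property `D ∩ J = 0`, i.e.
`J ⊆ Ann_B D`, which gives `β (α J) = J` for regular `J`. Applying this also to the regular ideal
`D` identifies the double annihilator of `J ∩ A` inside `A` with `J ∩ A`. The remaining identities
are formal properties of annihilators.
-/

lemma annB_anti {S T : Set B} (h : S ⊆ T) : annB T ⊆ annB S :=
  fun _ hx s hs => hx s (h hs)

lemma subset_annB_annB (S : Set B) : S ⊆ annB (annB S) :=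
  fun s hs _ hx => ⟨(hx s hs).2, (hx s hs).1⟩

lemma annB_annB_annB (S : Set B) : annB (annB (annB S)) = annB S :=
  (annB_anti (subset_annB_annB S)).antisymm (subset_annB_annB (annB S))

lemma annIn_eq_inter_annB (A S : Set B) : annIn A S = A ∩ annB S := rfl

lemma isClosed_annB (S : Set B) : IsClosed (annB S) := by
  simp only [annB, Set.ofPred_forall, Set.ofPred_and]
  exact isClosed_biInter fun s _ =>
    (isClosed_eq (continuous_mul_const s) continuous_const).inter
      (isClosed_eq (continuous_const_mul s) continuous_const)

lemma clSpan_subset {S : Set B} {K : Submodule ℂ B} (hK : IsClosed (K : Set B))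
    (hS : S ⊆ K) : clSpan S ⊆ K :=
  closure_minimal (Submodule.span_le.mpr hS) hK

lemma mul_eq_zero_of_mem_clSpan {S : Set B} {x t : B} (h : ∀ s ∈ S, s * x = 0)
    (ht : t ∈ clSpan S) : t * x = 0 :=
  clSpan_subset (K := LinearMap.ker (LinearMap.mulRight ℂ x))
    (isClosed_eq (continuous_mul_const x) continuous_const) h ht

lemma mul_eq_zero_of_mem_clSpan' {S : Set B} {x t : B} (h : ∀ s ∈ S, x * s = 0)
    (ht : t ∈ clSpan S) : x * t = 0 :=
  clSpan_subset (K := LinearMap.ker (LinearMap.mulLeft ℂ x))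
    (isClosed_eq (continuous_const_mul x) continuous_const) h ht

lemma closedTwoSidedIdeal_annB_of_mul_eq_zero {S : Set B}
    (hleft : ∀ a, ∀ x ∈ annB S, ∀ s ∈ S, s * a * x = 0)
    (hright : ∀ a, ∀ x ∈ annB S, ∀ s ∈ S, x * (a * s) = 0) :
    ClosedTwoSidedIdeal (annB S) where
  isClosed := isClosed_annB S
  zero_mem := fun _ _ => by simp
  add_mem := fun x y hx hy s hs => by
    simp [add_mul, mul_add, (hx s hs).1, (hx s hs).2, (hy s hs).1, (hy s hs).2]
  smul_mem := fun c x hx s hs => by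
    simp [smul_mul_assoc, mul_smul_comm, (hx s hs).1, (hx s hs).2]
  mul_mem_left := fun a x hx s hs =>
    ⟨by rw [mul_assoc, (hx s hs).1, mul_zero], by rw [← mul_assoc]; exact hleft a x hx s hs⟩
  mul_mem_right := fun a x hx s hs =>
    ⟨by rw [mul_assoc]; exact hright a x hx s hs, by rw [← mul_assoc, (hx s hs).2, zero_mul]⟩

lemma ClosedTwoSidedIdeal.annB {J : Set B} (hJ : ClosedTwoSidedIdeal J) :
    ClosedTwoSidedIdeal (annB J) :=
  closedTwoSidedIdeal_annB_of_mul_eq_zero (fun a _ hx _ hs => (hx _ (hJ.mul_mem_right a hs)).2)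
    (fun a _ hx _ hs => (hx _ (hJ.mul_mem_left a hs)).1)

lemma BInvariant.closedTwoSidedIdeal_annB {S : Set B} (hS : BInvariant S) :
    ClosedTwoSidedIdeal (annB S) := by
  refine closedTwoSidedIdeal_annB_of_mul_eq_zero (fun a x hx s hs => ?_) (fun a x hx s hs => ?_)
  · have hsa : s * a ∈ clSpan (Set.univ * S) :=
      hS ▸ subset_closure (Submodule.subset_span (Set.mul_mem_mul hs (Set.mem_univ a)))
    refine mul_eq_zero_of_mem_clSpan ?_ hsa
    rintro _ ⟨b, -, s', hs', rfl⟩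
    rw [mul_assoc, (hx s' hs').2, mul_zero]
  · have has : a * s ∈ clSpan (S * Set.univ) :=
      hS ▸ subset_closure (Submodule.subset_span (Set.mul_mem_mul (Set.mem_univ a) hs))
    refine mul_eq_zero_of_mem_clSpan' ?_ has
    rintro _ ⟨s', hs', b, -, rfl⟩
    rw [← mul_assoc, (hx s' hs').1, zero_mul]

lemma ClosedTwoSidedIdeal.inter {J K : Set B} (hJ : ClosedTwoSidedIdeal J)
    (hK : ClosedTwoSidedIdeal K) : ClosedTwoSidedIdeal (J ∩ K) where
  isClosed := hJ.isClosed.inter hK.isClosed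
  zero_mem := ⟨hJ.zero_mem, hK.zero_mem⟩
  add_mem := fun _ _ hx hy => ⟨hJ.add_mem hx.1 hy.1, hK.add_mem hx.2 hy.2⟩
  smul_mem := fun c _ hx => ⟨hJ.smul_mem c hx.1, hK.smul_mem c hx.2⟩
  mul_mem_left := fun a _ hx => ⟨hJ.mul_mem_left a hx.1, hK.mul_mem_left a hx.2⟩
  mul_mem_right := fun a _ hx => ⟨hJ.mul_mem_right a hx.1, hK.mul_mem_right a hx.2⟩

lemma ClosedTwoSidedIdeal.idealOf_inter {A J : Set B} (hJ : ClosedTwoSidedIdeal J)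
    (hA : ClosedStarSubalgebra A) : IdealOf A (J ∩ A) where
  subset := Set.inter_subset_right
  isClosed := hJ.isClosed.inter hA.isClosed
  zero_mem := ⟨hJ.zero_mem, hA.zero_mem⟩
  add_mem := fun _ _ hx hy => ⟨hJ.add_mem hx.1 hy.1, hA.add_mem hx.2 hy.2⟩
  smul_mem := fun c _ hx => ⟨hJ.smul_mem c hx.1, hA.smul_mem c hx.2⟩
  mul_mem_left := fun a ha _ hx => ⟨hJ.mul_mem_left a hx.1, hA.mul_mem ha hx.2⟩
  mul_mem_right := fun a ha _ hx => ⟨hJ.mul_mem_right a hx.1, hA.mul_mem hx.2 ha⟩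

lemma eq_zero_of_mul_star_mul_self_eq_zero {y : B} (h : y * (star y * y) = 0) : y = 0 := by
  have : star (star y * y) * (star y * y) = 0 := by
    rw [star_mul, star_star, mul_assoc, h, mul_zero]
  rwa [CStarRing.star_mul_self_eq_zero_iff, CStarRing.star_mul_self_eq_zero_iff] at this

section IdealIntersection

variable {A : Set B}

lemma annB_inter_inter_inter_eq_zero (hA : ClosedStarSubalgebra A) {J : Set B}
    (hJ : ClosedTwoSidedIdeal J) : annB (J ∩ A) ∩ J ∩ A = {0} := by
  refine Set.eq_singleton_iff_unique_mem.mpr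
    ⟨⟨⟨fun _ _ => by simp, hJ.zero_mem⟩, hA.zero_mem⟩, ?_⟩
  rintro y ⟨⟨hyD, hyJ⟩, hyA⟩
  have hy : star y * y ∈ J ∩ A := ⟨hJ.mul_mem_left _ hyJ, hA.mul_mem (hA.star_mem hyA) hyA⟩
  exact eq_zero_of_mul_star_mul_self_eq_zero (hyD _ hy).1

lemma subset_annB_annB_inter (hA : ClosedStarSubalgebra A)
    (hiip : IdealIntersectionProperty A) (hinv : AxiomInv A) {J : Set B}
    (hJ : ClosedTwoSidedIdeal J) : J ⊆ annB (annB (J ∩ A)) := by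
  have hD : ClosedTwoSidedIdeal (annB (J ∩ A)) := (hinv J hJ).closedTwoSidedIdeal_annB
  have hDJ : annB (J ∩ A) ∩ J = {0} := by
    by_contra hne
    exact hiip _ (hD.inter hJ) hne (annB_inter_inter_inter_eq_zero hA hJ)
  have hmem : ∀ {x}, x ∈ annB (J ∩ A) ∩ J → x = 0 := fun hx => by rwa [hDJ] at hx
  exact fun j hj d hd =>
    ⟨hmem ⟨hD.mul_mem_left j hd, hJ.mul_mem_right d hj⟩,
      hmem ⟨hD.mul_mem_right j hd, hJ.mul_mem_left d hj⟩⟩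

lemma annB_annB_inter_eq (hA : ClosedStarSubalgebra A) (hiip : IdealIntersectionProperty A)
    (hinv : AxiomInv A) {J : Set B} (hJ : RegularIdealB J) : annB (annB (J ∩ A)) = J :=
  (subset_annB_annB_inter hA hiip hinv hJ.1).antisymm' <| by
    conv_rhs => rw [← hJ.2]
    exact annB_anti (annB_anti Set.inter_subset_left)

lemma annB_inter_annB_inter_eq (hA : ClosedStarSubalgebra A) (hiip : IdealIntersectionProperty A)
    (hinv : AxiomInv A) {J : Set B} (hJ : RegularIdealB J) : annB (annB (J ∩ A) ∩ A) = J := by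
  have hD : RegularIdealB (annB (J ∩ A)) :=
    ⟨(hinv J hJ.1).closedTwoSidedIdeal_annB, annB_annB_annB _⟩
  rw [← annB_annB_annB (annB (J ∩ A) ∩ A), annB_annB_inter_eq hA hiip hinv hD,
    annB_annB_inter_eq hA hiip hinv hJ]

lemma regularIdealIn_inter (hA : ClosedStarSubalgebra A) (hiip : IdealIntersectionProperty A)
    (hinv : AxiomInv A) {J : Set B} (hJ : RegularIdealB J) : RegularIdealIn A (J ∩ A) := by
  refine ⟨hJ.1.idealOf_inter hA, ?_⟩
  rw [annIn_eq_inter_annB, annIn_eq_inter_annB, Set.inter_comm A (annB (J ∩ A)),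
    annB_inter_annB_inter_eq hA hiip hinv hJ, Set.inter_comm]

end IdealIntersection

lemma annB_annB_inter_eq_of_regularIdealIn {A I : Set B} (hI : RegularIdealIn A I) :
    annB (annB I) ∩ A = I := by
  refine Set.Subset.antisymm (fun x hx => ?_) fun s hs => ⟨subset_annB_annB I hs, hI.1.subset hs⟩
  rw [← hI.2]
  exact ⟨hx.2, fun y hy => hx.1 y hy.2⟩

/-- Main theorem: under the ideal intersection property and axiom (inv), the map
`α : J ↦ J ∩ A` is a bijection from the regular ideals of `B` onto the regular
`B`-invariant ideals of `A`, with inverse `β : I ↦ Ann_B(Ann_B(I))`; both maps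
preserve inclusion. -/
theorem stmt13 (A : Set B) (hA : ClosedStarSubalgebra A)
    (hiip : IdealIntersectionProperty A) (hinv : AxiomInv A) :
    (∀ J : Set B, RegularIdealB J → RegularIdealIn A (J ∩ A) ∧ BInvariant (J ∩ A)) ∧
    (∀ I : Set B, RegularIdealIn A I → BInvariant I → RegularIdealB (annB (annB I))) ∧
    (∀ J : Set B, RegularIdealB J → annB (annB (J ∩ A)) = J) ∧
    (∀ I : Set B, RegularIdealIn A I → BInvariant I → annB (annB I) ∩ A = I) ∧
    (∀ J₁ J₂ : Set B, RegularIdealB J₁ → RegularIdealB J₂ → J₁ ⊆ J₂ →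
      J₁ ∩ A ⊆ J₂ ∩ A) ∧
    (∀ I₁ I₂ : Set B, RegularIdealIn A I₁ → BInvariant I₁ →
      RegularIdealIn A I₂ → BInvariant I₂ → I₁ ⊆ I₂ →
      annB (annB I₁) ⊆ annB (annB I₂)) :=
  ⟨fun J hJ => ⟨regularIdealIn_inter hA hiip hinv hJ, hinv J hJ.1⟩,
    fun _ _ hI => ⟨hI.closedTwoSidedIdeal_annB.annB, annB_annB_annB _⟩,
    fun _ hJ => annB_annB_inter_eq hA hiip hinv hJ,
    fun _ hI _ => annB_annB_inter_eq_of_regularIdealIn hI,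
    fun _ _ _ _ h => Set.inter_subset_inter_left A h,
    fun _ _ _ _ _ _ h => annB_anti (annB_anti h)⟩
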